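/- Let (Λ₀, Λ) be a relative category of paths, v a vertex of Λ₀, R a generalized Boolean algebra, and μ : 𝒟(Λ₀,Λ)⁰_v → R. Then μ extends to a Boolean ring homomorphism 𝒜(Λ₀,Λ)_v → R if and only if the following two conditions hold: (1) for all E, F ∈ 𝒟(Λ₀,Λ)⁰_v, if E ∩ F ≠ ∅ then E ∩ F ∈ 𝒟(Λ₀,Λ)⁰_v and μ(E ∩ F) = μ(E) ⊓ μ(F), while if E ∩ F = ∅ then μ(E) ⊓ μ(F) = ⊥; (2) μ(E) = μ(F₁) ⊔ ⋯ ⊔ μ(Fₙ) whenever E, F₁, …, Fₙ ∈ 𝒟(Λ₀,Λ)⁰_v and E = F₁ ∪ ⋯ ∪ Fₙ. In this case the extension to 𝒜(Λ₀,Λ)_v is unique. -/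

import Mathlib

universe u v

/-- A category of paths: a small category (objects identified with identity
morphisms) with left and right cancellation and no inverses. -/
structure CategoryOfPaths (Λ : Type u) where
  s : Λ → Λ
  r : Λ → Λ
  comp : Λ → Λ → Λ
  s_comp : ∀ {α β : Λ}, s α = r β → s (comp α β) = s β
  r_comp : ∀ {α β : Λ}, s α = r β → r (comp α β) = r α
  comp_assoc : ∀ {α β γ : Λ}, s α = r β → s β = r γ →
    comp (comp α β) γ = comp α (comp β γ)
  id_comp : ∀ α : Λ, comp (r α) α = α
  comp_id : ∀ α : Λ, comp α (s α) = α
  s_r : ∀ α : Λ, s (r α) = r α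
  r_r : ∀ α : Λ, r (r α) = r α
  r_s : ∀ α : Λ, r (s α) = s α
  s_s : ∀ α : Λ, s (s α) = s α
  left_cancel : ∀ {α β γ : Λ}, s α = r β → s α = r γ → comp α β = comp α γ → β = γ
  right_cancel : ∀ {β γ α : Λ}, s β = r α → s γ = r α → comp β α = comp γ α → β = γ
  no_inverses : ∀ {α β : Λ}, s α = r β → comp α β = s β → α = s β ∧ β = s β

variable {Λ : Type u}

/-- The tail set `αΛ`. -/
def pTail (C : CategoryOfPaths Λ) (α : Λ) : Set Λ :=
  {x | ∃ β, C.s α = C.r β ∧ x = C.comp α β}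

/-- `vΛ`, the paths with range `v`. -/
def pRng (C : CategoryOfPaths Λ) (w : Λ) : Set Λ := {α | C.r α = w}

/-- `Λv`, the paths with source `v`. -/
def pSrc (C : CategoryOfPaths Λ) (w : Λ) : Set Λ := {α | C.s α = w}

/-- `[β]`, the initial segments of `β`. -/
def pSeg (C : CategoryOfPaths Λ) (β : Λ) : Set Λ := {α | β ∈ pTail C α}

/-- `α ⋔ β`. -/
def pMeets (C : CategoryOfPaths Λ) (α β : Λ) : Prop :=
  (pTail C α ∩ pTail C β).Nonempty

/-- `αE`. -/
def pMulSet (C : CategoryOfPaths Λ) (α : Λ) (E : Set Λ) : Set Λ :=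
  {x | ∃ β ∈ E, C.s α = C.r β ∧ x = C.comp α β}

/-- `σ^α(E ∩ αΛ)`, computed inside an ambient subcategory `S`. -/
def pShiftIn (C : CategoryOfPaths Λ) (S : Set Λ) (α : Λ) (E : Set Λ) : Set Λ :=
  {β | β ∈ S ∧ C.s α = C.r β ∧ C.comp α β ∈ E}

/-- `σ^α(E ∩ αΛ)`. -/
def pShift (C : CategoryOfPaths Λ) (α : Λ) (E : Set Λ) : Set Λ :=
  {β | C.s α = C.r β ∧ C.comp α β ∈ E}

/-- `⋁F`: the minimal common extensions of `F`. -/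
def pMinExt (C : CategoryOfPaths Λ) (F : Set Λ) : Set Λ :=
  {ε | (∀ α ∈ F, ε ∈ pTail C α) ∧
    ∀ γ, (∀ α ∈ F, γ ∈ pTail C α) → ε ∈ pTail C γ → γ = ε}

/-- `α ∨ β`: the minimal common extensions of `α` and `β`. -/
def pMinCE (C : CategoryOfPaths Λ) (α β : Λ) : Set Λ := pMinExt C {α, β}

/-- A subcategory of a category of paths, as a set of morphisms. -/
structure IsSubcategory (C : CategoryOfPaths Λ) (Λ₀ : Set Λ) : Prop where
  comp_mem : ∀ {α β : Λ}, α ∈ Λ₀ → β ∈ Λ₀ → C.s α = C.r β → C.comp α β ∈ Λ₀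
  s_mem : ∀ {α : Λ}, α ∈ Λ₀ → C.s α ∈ Λ₀
  r_mem : ∀ {α : Λ}, α ∈ Λ₀ → C.r α ∈ Λ₀

/-- A finitely aligned category of paths. -/
def FinitelyAligned (C : CategoryOfPaths Λ) : Prop :=
  ∀ α β : Λ, ∃ G : Set Λ, G.Finite ∧
    pTail C α ∩ pTail C β = ⋃ ε ∈ G, pTail C ε

/-- A finitely aligned relative category of paths `(Λ₀, Λ)`. -/
def RelFinitelyAligned (C : CategoryOfPaths Λ) (Λ₀ : Set Λ) : Prop :=
  (∀ α ∈ Λ₀, ∀ β ∈ Λ₀, ∃ G : Set Λ, G.Finite ∧ G ⊆ Λ₀ ∧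
      pTail C α ∩ pTail C β = ⋃ ε ∈ G, pTail C ε) ∧
  (∀ α ∈ Λ₀, pTail C α ∩ Λ₀ = pMulSet C α Λ₀)

/-- A ring of sets: contains `∅` and is closed under `∪`, `∩`, and `\`. -/
def IsSetRing {γ : Type v} (R : Set (Set γ)) : Prop :=
  ∅ ∈ R ∧ (∀ E ∈ R, ∀ F ∈ R, E ∪ F ∈ R) ∧ (∀ E ∈ R, ∀ F ∈ R, E ∩ F ∈ R) ∧
    (∀ E ∈ R, ∀ F ∈ R, E \ F ∈ R)

/-- A ring of sets on `S`: a ring of sets all of whose members are subsets of `S`. -/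
def IsSetRingOn {γ : Type v} (S : Set γ) (R : Set (Set γ)) : Prop :=
  IsSetRing R ∧ ∀ E ∈ R, E ⊆ S

/-- The ring of sets generated by a collection. -/
def setRingGen {γ : Type v} (G : Set (Set γ)) : Set (Set γ) :=
  ⋂₀ {R | IsSetRing R ∧ G ⊆ R}

/-- The ring of sets on `S` generated by a collection. -/
def setRingGenOn {γ : Type v} (S : Set γ) (G : Set (Set γ)) : Set (Set γ) :=
  ⋂₀ {R | IsSetRingOn S R ∧ G ⊆ R}

/-- A zigzag: a list of pairs `(αᵢ, βᵢ)` with `r αᵢ = r βᵢ` and `s αᵢ₊₁ = s βᵢ`. -/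
def IsZigzag (C : CategoryOfPaths Λ) (l : List (Λ × Λ)) : Prop :=
  (∀ p ∈ l, C.r p.1 = C.r p.2) ∧ l.Chain' (fun p q => C.s q.1 = C.s p.2)

/-- The (graph of the) zigzag map `φ_ζ = σ^{α₁} β₁ ⋯ σ^{αₙ} βₙ`, computed
inside an ambient subcategory `S`. -/
def zigzagRelIn (C : CategoryOfPaths Λ) (S : Set Λ) : List (Λ × Λ) → Λ → Λ → Prop
  | [], x, y => x = y ∧ x ∈ S
  | p :: rest, x, y => ∃ z, zigzagRelIn C S rest x z ∧ C.s p.2 = C.r z ∧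
      C.s p.1 = C.r y ∧ y ∈ S ∧ C.comp p.2 z = C.comp p.1 y

/-- `A(ζ)`: the domain of the zigzag map. -/
def zigzagDomIn (C : CategoryOfPaths Λ) (S : Set Λ) (l : List (Λ × Λ)) : Set Λ :=
  {x | ∃ y, zigzagRelIn C S l x y}

/-- `𝒟(Λ₀,Λ)⁰_v`: nonempty zigzag sets with entries in `Λ₀` and source `v`,
computed inside the ambient subcategory `S`. -/
def relD0 (C : CategoryOfPaths Λ) (Λ₀ S : Set Λ) (w : Λ) : Set (Set Λ) :=
  {E | E.Nonempty ∧ ∃ (l : List (Λ × Λ)) (h : l ≠ []),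
    IsZigzag C l ∧ (∀ p ∈ l, p.1 ∈ Λ₀ ∧ p.2 ∈ Λ₀) ∧
    C.s (l.getLast h).2 = w ∧ E = zigzagDomIn C S l}

/-- `𝒜(Λ₀,Λ)_v`: the ring of sets generated by the zigzag sets. -/
def relAring (C : CategoryOfPaths Λ) (Λ₀ S : Set Λ) (w : Λ) : Set (Set Λ) :=
  setRingGenOn {α | α ∈ S ∧ C.r α = w} (relD0 C Λ₀ S w)

/-- A filter in a ring of sets. -/
def IsFilterIn {γ : Type v} (R U : Set (Set γ)) : Prop :=
  U.Nonempty ∧ U ⊆ R ∧ (∀ E ∈ U, E.Nonempty) ∧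
    (∀ E ∈ U, ∀ F ∈ U, E ∩ F ∈ U) ∧ (∀ E ∈ U, ∀ F ∈ R, E ⊆ F → F ∈ U)

/-- An ultrafilter in a ring of sets: a maximal filter. -/
def IsUltrafilterIn {γ : Type v} (R U : Set (Set γ)) : Prop :=
  IsFilterIn R U ∧ ∀ V, IsFilterIn R V → U ⊆ V → V = U

/-- A filter base in a ring of sets. -/
def IsFilterBaseIn {γ : Type v} (R B : Set (Set γ)) : Prop :=
  B.Nonempty ∧ B ⊆ R ∧ (∀ E ∈ B, E.Nonempty) ∧
    ∀ E ∈ B, ∀ F ∈ B, ∃ G ∈ B, G ⊆ E ∩ F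

/-- The filter generated by a filter base. -/
def filterGenBy {γ : Type v} (R B : Set (Set γ)) : Set (Set γ) :=
  {E | E ∈ R ∧ ∃ F ∈ B, F ⊆ E}

/-- An ultrafilter base in a ring of sets. -/
def IsUltrafilterBaseIn {γ : Type v} (R B : Set (Set γ)) : Prop :=
  IsFilterBaseIn R B ∧ IsUltrafilterIn R (filterGenBy R B)

/-- A Boolean ring homomorphism defined on a ring of sets `A` with values in a
generalized Boolean algebra. -/
def IsBRHomOn {γ : Type v} {R : Type*} [GeneralizedBooleanAlgebra R]
    (A : Set (Set γ)) (ν : Set γ → R) : Prop :=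
  ν ∅ = ⊥ ∧ (∀ E ∈ A, ∀ F ∈ A, ν (E ∪ F) = ν E ⊔ ν F) ∧
    (∀ E ∈ A, ∀ F ∈ A, ν (E ∩ F) = ν E ⊓ ν F) ∧
    (∀ E ∈ A, ∀ F ∈ A, ν (E \ F) = ν E \ ν F)

/-- `𝒜_v`: the ring of sets on `vΛ` generated by the tail sets. -/
def tailRing (C : CategoryOfPaths Λ) (w : Λ) : Set (Set Λ) :=
  setRingGenOn (pRng C w) {E | ∃ α, C.r α = w ∧ E = pTail C α}

/-- A directed subset. -/
def pDirected (C : CategoryOfPaths Λ) (x : Set Λ) : Prop :=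
  ∀ α ∈ x, ∀ β ∈ x, (pTail C α ∩ pTail C β ∩ x).Nonempty

/-- A hereditary subset. -/
def pHereditary (C : CategoryOfPaths Λ) (x : Set Λ) : Prop :=
  ∀ γ ∈ x, ∀ α : Λ, γ ∈ pTail C α → α ∈ x

/-- `vΛ*`: the nonempty directed hereditary subsets of `vΛ`. -/
def lamStar (C : CategoryOfPaths Λ) (w : Λ) : Set (Set Λ) :=
  {x | x.Nonempty ∧ x ⊆ pRng C w ∧ pDirected C x ∧ pHereditary C x}

/-- `vΛ**`: the maximal directed subsets of `vΛ`. -/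
def lamStarStar (C : CategoryOfPaths Λ) (w : Λ) : Set (Set Λ) :=
  {x | x ⊆ pRng C w ∧ pDirected C x ∧
    ∀ y, y ⊆ pRng C w → pDirected C y → x ⊆ y → y = x}

/-- `αx = ⋃_{γ ∈ x} [αγ]` for `x ∈ s(α)Λ*`. -/
def pMulStar (C : CategoryOfPaths Λ) (α : Λ) (x : Set Λ) : Set Λ :=
  {δ | ∃ γ ∈ x, C.s α = C.r γ ∧ C.comp α γ ∈ pTail C δ}

/-- `𝒰_{C,0}`. -/
def UC0 (C : CategoryOfPaths Λ) (w : Λ) (x : Set Λ) : Set (Set Λ) :=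
  {E | E ∈ tailRing C w ∧ ∃ α ∈ x, pTail C α ⊆ E}

/-- `𝒰_C`. -/
def UC (C : CategoryOfPaths Λ) (w : Λ) (x : Set Λ) : Set (Set Λ) :=
  {E | E ∈ tailRing C w ∧ ∃ α ∈ x, x ∩ pTail C α ⊆ E}

/-- `X_v = vΛ*` as a type. -/
abbrev Xv (C : CategoryOfPaths Λ) (w : Λ) : Type u := {x : Set Λ // x ∈ lamStar C w}

/-- The topology on `X_v` generated by the sets `Ê`, `E ∈ 𝒜_v`. -/
def XvTop (C : CategoryOfPaths Λ) (w : Λ) : TopologicalSpace (Xv C w) :=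
  TopologicalSpace.generateFrom
    {t | ∃ E ∈ tailRing C w, t = {x : Xv C w | E ∈ UC C w x.1}}

/-- The vertices of `Λ`. -/
abbrev Vertex (C : CategoryOfPaths Λ) : Type u := {w : Λ // C.r w = w}

/-- `X`: the disjoint union of the spaces `X_v`. -/
abbrev Xtotal (C : CategoryOfPaths Λ) : Type u := Σ w : Vertex C, Xv C w.1

/-- The disjoint union topology on `X`. -/
def XtotalTop (C : CategoryOfPaths Λ) : TopologicalSpace (Xtotal C) :=
  letI : ∀ w : Vertex C, TopologicalSpace (Xv C w.1) := fun w => XvTop C w.1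
  inferInstance

/-- The boundary `∂Λ`: the closure of `Λ**` in `X`. -/
def boundarySet (C : CategoryOfPaths Λ) : Set (Xtotal C) :=
  @closure _ (XtotalTop C) {p : Xtotal C | p.2.1 ∈ lamStarStar C p.1.1}

/-- An exhaustive subset of `vΛ`. -/
def ExhaustiveAt (C : CategoryOfPaths Λ) (w : Λ) (F : Set Λ) : Prop :=
  ∀ α, C.r α = w → ∃ β ∈ F, pMeets C α β

/-- An aperiodic point of `Λ*`. -/
def pAperiodic (C : CategoryOfPaths Λ) (x : Set Λ) : Prop :=
  ∀ α ∈ x, ∀ β ∈ x, α ≠ β → pShift C α x ≠ pShift C β x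

/-- A right-aperiodic point of `wΛ*`. -/
def pRightAperiodicAt (C : CategoryOfPaths Λ) (w : Λ) (x : Set Λ) : Prop :=
  ∀ α β : Λ, C.s α = w → C.s β = w → α ≠ β → pMulStar C α x ≠ pMulStar C β x

/-- The triples `(α, β, x)` with `s α = s β` and `x ∈ s(α)Λ*`. -/
abbrev pTrip (C : CategoryOfPaths Λ) : Type u :=
  {t : Λ × Λ × Set Λ // C.s t.1 = C.s t.2.1 ∧ t.2.2 ∈ lamStar C (C.s t.1)}

/-- The groupoid equivalence relation on triples. -/
def tripRel (C : CategoryOfPaths Λ) (t t' : pTrip C) : Prop :=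
  ∃ (z : Set Λ) (δ δ' : Λ),
    z ∈ lamStar C (C.s δ) ∧ z ∈ lamStar C (C.s δ') ∧
    C.s t.1.1 = C.r δ ∧ C.s t'.1.1 = C.r δ' ∧
    t.1.2.2 = pMulStar C δ z ∧ t'.1.2.2 = pMulStar C δ' z ∧
    C.comp t.1.1 δ = C.comp t'.1.1 δ' ∧
    C.comp t.1.2.1 δ = C.comp t'.1.2.1 δ'

/-- The ultrafilter space of `𝒜(Λ₀,Λ)_v`. -/
abbrev relXv (C : CategoryOfPaths Λ) (Λ₀ : Set Λ) (w : Λ) : Type u :=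
  {U : Set (Set Λ) // IsUltrafilterIn (relAring C Λ₀ Set.univ w) U}

/-- The topology on the ultrafilter space of `𝒜(Λ₀,Λ)_v` generated by the `Ê`. -/
def relXvTop (C : CategoryOfPaths Λ) (Λ₀ : Set Λ) (w : Λ) :
    TopologicalSpace (relXv C Λ₀ w) :=
  TopologicalSpace.generateFrom
    {t | ∃ E ∈ relAring C Λ₀ Set.univ w, t = {U : relXv C Λ₀ w | E ∈ U.1}}

/-!
Necessity is immediate: `A(ζ₁) ∩ A(ζ₂) = A(ζ₁ ζ₂⁻¹ ζ₂)`, so `𝒟(Λ₀,Λ)⁰_v` is closed under nonempty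
intersections, and a Boolean ring homomorphism preserves finite unions.

For sufficiency, every member of the generated ring is a finite union of cells
`E \ (F₁ ∪ ⋯ ∪ Fₖ)` with `E, Fᵢ ∈ 𝒟`, to which we assign the join of the values
`μ E \ (μ F₁ ⊔ ⋯ ⊔ μ Fₖ)`. By (1) an intersection of two cells is a cell or empty, and a difference
of two cells is a finite union of cells, so such decompositions are closed under the ring
operations. The value is independent of the decomposition because it is monotone: if a cell lies
below a finite union of cells, its value lies below the join of theirs. This is proved by induction
on the covering cells and their subtracted generators, splitting along a subtracted generator `G`
(on `G` the covering cell is empty, off `G` it can be enlarged); the base case, a cell below a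
union of generators, is (2) applied to the nonempty traces `E ∩ Fᵢ`.

Uniqueness: the sets on which two extensions agree form a ring containing the generators.
-/

theorem Finset.sup_eq_univ_sup_equivFin {ι β : Type*} [SemilatticeSup β] [OrderBot β]
    (s : Finset ι) (f : ι → β) :
    s.sup f = Finset.univ.sup fun i => f (s.equivFin.symm i) := by
  rw [← Finset.sup_attach, ← Finset.univ_eq_attach, ← Finset.map_univ_equiv s.equivFin.symm,
    Finset.sup_map]
  rfl

section CellVal

variable {α γ : Type*} [GeneralizedBooleanAlgebra γ] (f : α → γ)

/-- With `f = id` this is the cell `E \ (F₁ ⊔ ⋯ ⊔ Fₖ)` of `c = (E, {F₁, …, Fₖ})`; with `f = μ` it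
is the value `μ E \ (μ F₁ ⊔ ⋯ ⊔ μ Fₖ)` assigned to that cell. -/
def cellVal (c : α × Finset α) : γ :=
  f c.1 \ c.2.sup f

@[simp] theorem cellVal_empty (E : α) : cellVal f (E, ∅) = f E := by simp [cellVal]

theorem cellVal_insert [DecidableEq α] (E G : α) (s : Finset α) :
    cellVal f (E, insert G s) = cellVal f (E, s) \ f G := by
  rw [cellVal, cellVal, Finset.sup_insert, sdiff_sdiff_left, sup_comm]

theorem cellVal_inf (E : α) (s : Finset α) (x : γ) :
    cellVal f (E, s) ⊓ x = (f E ⊓ x) \ s.sup f :=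
  sdiff_inf_right_comm _ _ _

theorem cellVal_inf_cellVal [DecidableEq α] (c d : α × Finset α) :
    cellVal f c ⊓ cellVal f d = (f c.1 ⊓ f d.1) \ (c.2 ∪ d.2).sup f := by
  rw [cellVal, cellVal, ← inf_sdiff_assoc, sdiff_inf_right_comm, sdiff_sdiff, Finset.sup_union]

theorem cellVal_sdiff_cellVal [DecidableEq α] (c : α × Finset α) (E : α) (s : Finset α) :
    cellVal f c \ cellVal f (E, s) =
      cellVal f (c.1, insert E c.2) ⊔ s.sup fun G => cellVal f c ⊓ f G := by
  rw [cellVal_insert, ← Finset.sup_inf_distrib_left]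
  exact sdiff_sdiff_right'

end CellVal

section CellDecomposition

variable {α β : Type*} [GeneralizedBooleanAlgebra α] [GeneralizedBooleanAlgebra β]

structure RespectsMeetsCovers (D : Set α) (μ : α → β) : Prop where
  inf : ∀ E ∈ D, ∀ F ∈ D, E ⊓ F ≠ ⊥ → E ⊓ F ∈ D ∧ μ (E ⊓ F) = μ E ⊓ μ F
  inf_eq_bot : ∀ E ∈ D, ∀ F ∈ D, E ⊓ F = ⊥ → μ E ⊓ μ F = ⊥
  sup : ∀ E ∈ D, ∀ (n : ℕ) (G : Fin n → α), (∀ i, G i ∈ D) →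
    E = Finset.univ.sup G → μ E = Finset.univ.sup fun i => μ (G i)

def IsCellOver (D : Set α) (c : α × Finset α) : Prop := c.1 ∈ D ∧ ↑c.2 ⊆ D

def CellValueBound (D : Set α) (μ : α → β) (a : α) (b : β) : Prop :=
  ∀ c, IsCellOver D c → cellVal id c ≤ a → cellVal μ c ≤ b

def CellDecomp (D : Set α) (μ : α → β) (a : α) (b : β) : Prop :=
  ∃ L : Finset (α × Finset α), (∀ c ∈ L, IsCellOver D c) ∧
    a = L.sup (cellVal id) ∧ b = L.sup (cellVal μ)

variable {D : Set α} {μ : α → β}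

theorem cellDecomp_bot : CellDecomp D μ ⊥ ⊥ := ⟨∅, by simp, rfl, rfl⟩

theorem cellDecomp_cellVal {c : α × Finset α} (hc : IsCellOver D c) :
    CellDecomp D μ (cellVal id c) (cellVal μ c) :=
  ⟨{c}, by simpa using hc, by simp, by simp⟩

theorem cellDecomp_of_mem {E : α} (hE : E ∈ D) : CellDecomp D μ E (μ E) := by
  simpa using cellDecomp_cellVal (μ := μ) (c := (E, ∅)) ⟨hE, by simp⟩

theorem CellDecomp.sup {a a' : α} {b b' : β} (h : CellDecomp D μ a b)
    (h' : CellDecomp D μ a' b') : CellDecomp D μ (a ⊔ a') (b ⊔ b') := by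
  classical
  obtain ⟨L, hL, rfl, rfl⟩ := h
  obtain ⟨L', hL', rfl, rfl⟩ := h'
  refine ⟨L ∪ L', fun c hc => ?_, Finset.sup_union.symm, Finset.sup_union.symm⟩
  exact (Finset.mem_union.1 hc).elim (hL c) (hL' c)

theorem cellDecomp_finset_sup {ι : Type*} (s : Finset ι) (f : ι → α) (g : ι → β)
    (h : ∀ i ∈ s, CellDecomp D μ (f i) (g i)) : CellDecomp D μ (s.sup f) (s.sup g) := by
  induction s using Finset.cons_induction with
  | empty => exact cellDecomp_bot
  | cons i s _ ih =>
    rw [Finset.sup_cons, Finset.sup_cons]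
    exact (h i (Finset.mem_cons_self i s)).sup
      (ih fun j hj => h j (Finset.mem_cons_of_mem hj))

namespace RespectsMeetsCovers

variable (h : RespectsMeetsCovers D μ)
include h

theorem map_eq_finset_sup {E : α} (hE : E ∈ D) {s : Finset α} (hs : ↑s ⊆ D)
    (hEs : E = s.sup id) : μ E = s.sup μ := by
  rw [Finset.sup_eq_univ_sup_equivFin] at hEs ⊢
  exact h.sup E hE _ _ (fun i => hs (s.equivFin.symm i).2) hEs

theorem map_le_finset_sup {E : α} (hE : E ∈ D) {s : Finset α} (hs : ↑s ⊆ D)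
    (hEs : E ≤ s.sup id) : μ E ≤ s.sup μ := by
  classical
  set t := s.filter fun F => E ⊓ F ≠ ⊥
  have htD : ↑(t.image (E ⊓ ·)) ⊆ D := by
    intro x hx
    obtain ⟨F, hF, rfl⟩ := Finset.mem_image.1 hx
    obtain ⟨hFs, hEF⟩ := Finset.mem_filter.1 hF
    exact (h.inf E hE F (hs hFs) hEF).1
  have hEt : E = (t.image (E ⊓ ·)).sup id := by
    rw [Finset.sup_image]
    refine le_antisymm ?_ (Finset.sup_le fun F _ => inf_le_left)
    calc E = s.sup (E ⊓ ·) := by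
          rw [← Finset.sup_inf_distrib_left]
          exact (inf_eq_left.2 hEs).symm
      _ ≤ t.sup (E ⊓ ·) := Finset.sup_le fun F hF => by
          by_cases hEF : E ⊓ F = ⊥
          · exact hEF.le.trans bot_le
          · exact Finset.le_sup (f := (E ⊓ ·)) (Finset.mem_filter.2 ⟨hF, hEF⟩)
  rw [h.map_eq_finset_sup hE htD hEt, Finset.sup_image]
  refine Finset.sup_le fun F hF => ?_
  obtain ⟨hFs, hEF⟩ := Finset.mem_filter.1 hF
  calc μ (E ⊓ F) = μ E ⊓ μ F := (h.inf E hE F (hs hFs) hEF).2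
    _ ≤ s.sup μ := inf_le_right.trans (Finset.le_sup hFs)

theorem cellValueBound_bot : CellValueBound D μ ⊥ ⊥ := fun _ hc hca =>
  sdiff_le_iff.2 <| (h.map_le_finset_sup hc.1 hc.2 (sdiff_le_iff.1 hca |>.trans_eq
    (sup_bot_eq _))).trans_eq (sup_bot_eq _).symm

theorem cellValueBound_cellVal_sup {a : α} {b : β} (hab : CellValueBound D μ a b) {E : α}
    (hE : E ∈ D) (s : Finset α) (hs : ↑s ⊆ D) :
    CellValueBound D μ (cellVal id (E, s) ⊔ a) (cellVal μ (E, s) ⊔ b) := by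
  classical
  induction s using Finset.induction_on with
  | empty =>
    intro c hc hca
    have hc' : IsCellOver D (c.1, insert E c.2) :=
      ⟨hc.1, by simpa [Set.insert_subset_iff] using ⟨hE, hc.2⟩⟩
    have := hab _ hc' (by rw [cellVal_insert]; exact sdiff_le_iff.2 (by simpa using hca))
    rw [cellVal_insert] at this
    simpa using sdiff_le_iff.1 this
  | insert G s _ ih =>
    intro c hc hca
    rw [Finset.coe_insert, Set.insert_subset_iff] at hs
    have hcG : IsCellOver D (c.1, insert G c.2) :=
      ⟨hc.1, by simpa [Set.insert_subset_iff] using ⟨hs.1, hc.2⟩⟩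
    -- outside `G` the cell is covered by the larger cell `(E, s)` together with `a`
    have hout : cellVal μ c \ μ G ≤ cellVal μ (E, s) ⊔ b := by
      have := ih hs.2 _ hcG <| by
        rw [cellVal_insert]
        refine sdiff_le.trans (hca.trans (sup_le_sup_right ?_ _))
        rw [cellVal_insert]
        exact sdiff_le
      rwa [cellVal_insert] at this
    -- inside `G` the cell `(E, insert G s)` is empty, so `a` alone covers
    have hin : cellVal μ c ⊓ μ G ≤ b := by
      by_cases hG : c.1 ⊓ G = ⊥
      · exact ((inf_le_inf_right _ sdiff_le).trans (h.inf_eq_bot _ hc.1 _ hs.1 hG).le).trans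
          bot_le
      · obtain ⟨hGD, hμG⟩ := h.inf _ hc.1 _ hs.1 hG
        have := hab (c.1 ⊓ G, c.2) ⟨hGD, hc.2⟩ <| calc
          cellVal id (c.1 ⊓ G, c.2) = cellVal id c ⊓ G := (cellVal_inf id c.1 c.2 G).symm
          _ ≤ (cellVal id (E, insert G s) ⊔ a) ⊓ G := inf_le_inf_right G hca
          _ ≤ a := by
            rw [inf_sup_right, cellVal_insert]
            exact sup_le (disjoint_sdiff_self_left.eq_bot.le.trans bot_le) inf_le_left
        rwa [cellVal, hμG, ← cellVal_inf] at this
    calc cellVal μ c = cellVal μ c \ μ G ⊔ cellVal μ c ⊓ μ G := by rw [sup_comm, sup_inf_sdiff]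
      _ ≤ (cellVal μ (E, s) ⊔ b) \ μ G ⊔ b := by
          refine sup_le_sup ?_ hin
          rw [← sdiff_idem]
          exact sdiff_le_sdiff_right hout
      _ ≤ cellVal μ (E, insert G s) ⊔ b := by
          rw [sup_sdiff, cellVal_insert, sup_assoc]
          exact sup_le_sup_left (sup_le sdiff_le le_rfl) _

theorem cellDecomp_cellVal_inf_cellVal {c d : α × Finset α} (hc : IsCellOver D c)
    (hd : IsCellOver D d) :
    CellDecomp D μ (cellVal id c ⊓ cellVal id d) (cellVal μ c ⊓ cellVal μ d) := by
  classical
  rw [cellVal_inf_cellVal, cellVal_inf_cellVal]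
  by_cases hcd : c.1 ⊓ d.1 = ⊥
  · rw [id, id, hcd, h.inf_eq_bot _ hc.1 _ hd.1 hcd, bot_sdiff, bot_sdiff]
    exact cellDecomp_bot
  · obtain ⟨hcdD, hμcd⟩ := h.inf _ hc.1 _ hd.1 hcd
    rw [← hμcd]
    exact cellDecomp_cellVal (c := (c.1 ⊓ d.1, c.2 ∪ d.2)) ⟨hcdD, by simpa using ⟨hc.2, hd.2⟩⟩

theorem cellDecomp_cellVal_sdiff_cellVal {c d : α × Finset α} (hc : IsCellOver D c)
    (hd : IsCellOver D d) :
    CellDecomp D μ (cellVal id c \ cellVal id d) (cellVal μ c \ cellVal μ d) := by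
  classical
  obtain ⟨E, s⟩ := d
  rw [cellVal_sdiff_cellVal id, cellVal_sdiff_cellVal μ]
  refine (cellDecomp_cellVal (c := (c.1, insert E c.2)) ⟨hc.1, ?_⟩).sup
    (cellDecomp_finset_sup _ _ _ fun G hG => ?_)
  · simpa [Set.insert_subset_iff] using ⟨hd.1, hc.2⟩
  · simpa using h.cellDecomp_cellVal_inf_cellVal hc (d := (G, ∅)) ⟨hd.2 hG, by simp⟩

end RespectsMeetsCovers

namespace CellDecomp

variable (h : RespectsMeetsCovers D μ)
include h

theorem inf {a a' : α} {b b' : β} (ha : CellDecomp D μ a b)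
    (ha' : CellDecomp D μ a' b') : CellDecomp D μ (a ⊓ a') (b ⊓ b') := by
  obtain ⟨L, hL, rfl, rfl⟩ := ha
  obtain ⟨L', hL', rfl, rfl⟩ := ha'
  rw [Finset.sup_inf_distrib_right, Finset.sup_inf_distrib_right]
  simp_rw [Finset.sup_inf_distrib_left]
  exact cellDecomp_finset_sup _ _ _ fun c hc => cellDecomp_finset_sup _ _ _ fun d hd =>
    h.cellDecomp_cellVal_inf_cellVal (hL c hc) (hL' d hd)

theorem sdiff {a a' : α} {b b' : β} (ha : CellDecomp D μ a b)
    (ha' : CellDecomp D μ a' b') : CellDecomp D μ (a \ a') (b \ b') := by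
  classical
  obtain ⟨L', hL', rfl, rfl⟩ := ha'
  induction L' using Finset.induction_on generalizing a b with
  | empty => simpa using ha
  | insert d L' _ ih =>
    rw [Finset.sup_insert, Finset.sup_insert, ← sdiff_sdiff_left, ← sdiff_sdiff_left]
    refine ih ?_ fun c hc => hL' c (Finset.mem_insert_of_mem hc)
    obtain ⟨L, hL, rfl, rfl⟩ := ha
    rw [← Finset.sup_sdiff_right, ← Finset.sup_sdiff_right]
    exact cellDecomp_finset_sup _ _ _ fun c hc =>
      h.cellDecomp_cellVal_sdiff_cellVal (hL c hc) (hL' d (Finset.mem_insert_self d L'))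

theorem cellValueBound {a : α} {b : β} (hab : CellDecomp D μ a b) :
    CellValueBound D μ a b := by
  classical
  obtain ⟨L, hL, rfl, rfl⟩ := hab
  induction L using Finset.induction_on with
  | empty => exact h.cellValueBound_bot
  | insert d L _ ih =>
    rw [Finset.sup_insert, Finset.sup_insert]
    obtain ⟨hd₁, hd₂⟩ := hL d (Finset.mem_insert_self d L)
    exact h.cellValueBound_cellVal_sup (ih fun c hc => hL c (Finset.mem_insert_of_mem hc))
      hd₁ d.2 hd₂

theorem le {a : α} {b b' : β} (hab : CellDecomp D μ a b)
    (hab' : CellDecomp D μ a b') : b ≤ b' := by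
  obtain ⟨L, hL, rfl, rfl⟩ := hab
  exact Finset.sup_le fun c hc => hab'.cellValueBound h c (hL c hc) (Finset.le_sup hc)

theorem eq {a : α} {b b' : β} (hab : CellDecomp D μ a b) (hab' : CellDecomp D μ a b') :
    b = b' :=
  (hab.le h hab').antisymm (hab'.le h hab)

end CellDecomp

end CellDecomposition

section SetRing

variable {γ : Type*} {S : Set γ} {G : Set (Set γ)}

theorem subset_setRingGenOn : G ⊆ setRingGenOn S G :=
  fun _ hE => Set.mem_sInter.2 fun _ hR => hR.2 hE

theorem setRingGenOn_subset {R : Set (Set γ)} (hR : IsSetRingOn S R) (hG : G ⊆ R) :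
    setRingGenOn S G ⊆ R :=
  Set.sInter_subset_of_mem ⟨hR, hG⟩

theorem isSetRingOn_setRingGenOn (hGS : ∀ E ∈ G, E ⊆ S) :
    IsSetRingOn S (setRingGenOn S G) := by
  have hpow : IsSetRingOn S {A | A ⊆ S} :=
    ⟨⟨Set.empty_subset S, fun _ hE _ hF => Set.union_subset hE hF,
      fun _ hE _ _ => Set.inter_subset_left.trans hE,
      fun _ hE _ _ => Set.sdiff_subset.trans hE⟩, fun _ hE => hE⟩
  refine ⟨⟨?_, ?_, ?_, ?_⟩, fun E hE => setRingGenOn_subset hpow hGS hE⟩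
  · exact Set.mem_sInter.2 fun R hR => hR.1.1.1
  all_goals
    intro E hE F hF
    refine Set.mem_sInter.2 fun R hR => ?_
    have hER := Set.mem_sInter.1 hE R hR
    have hFR := Set.mem_sInter.1 hF R hR
  · exact hR.1.1.2.1 E hER F hFR
  · exact hR.1.1.2.2.1 E hER F hFR
  · exact hR.1.1.2.2.2 E hER F hFR

theorem setRingGenOn_induction (hGS : ∀ E ∈ G, E ⊆ S) {P : Set γ → Prop}
    (hG : ∀ E ∈ G, P E) (hempty : P ∅)
    (hunion : ∀ E ∈ setRingGenOn S G, ∀ F ∈ setRingGenOn S G, P E → P F → P (E ∪ F))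
    (hinter : ∀ E ∈ setRingGenOn S G, ∀ F ∈ setRingGenOn S G, P E → P F → P (E ∩ F))
    (hdiff : ∀ E ∈ setRingGenOn S G, ∀ F ∈ setRingGenOn S G, P E → P F → P (E \ F)) :
    ∀ E ∈ setRingGenOn S G, P E := by
  obtain ⟨⟨hR0, hRu, hRi, hRd⟩, hRS⟩ := isSetRingOn_setRingGenOn hGS
  have hring : IsSetRingOn S {E | E ∈ setRingGenOn S G ∧ P E} :=
    ⟨⟨⟨hR0, hempty⟩,
      fun E hE F hF => ⟨hRu E hE.1 F hF.1, hunion E hE.1 F hF.1 hE.2 hF.2⟩,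
      fun E hE F hF => ⟨hRi E hE.1 F hF.1, hinter E hE.1 F hF.1 hE.2 hF.2⟩,
      fun E hE F hF => ⟨hRd E hE.1 F hF.1, hdiff E hE.1 F hF.1 hE.2 hF.2⟩⟩,
      fun E hE => hRS E hE.1⟩
  exact fun E hE =>
    (setRingGenOn_subset hring (fun E hE => ⟨subset_setRingGenOn hE, hG E hE⟩) hE).2

end SetRing

section BooleanRingHom

variable {γ β : Type*} [GeneralizedBooleanAlgebra β]

theorem IsBRHomOn.finset_sup {A : Set (Set γ)} {ν : Set γ → β} (hA : IsSetRing A)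
    (hν : IsBRHomOn A ν) {ι : Type*} (s : Finset ι) {f : ι → Set γ} (hf : ∀ i ∈ s, f i ∈ A) :
    s.sup f ∈ A ∧ ν (s.sup f) = s.sup fun i => ν (f i) := by
  induction s using Finset.cons_induction with
  | empty => exact ⟨hA.1, hν.1⟩
  | cons i s _ ih =>
    obtain ⟨hsA, hsν⟩ := ih fun j hj => hf j (Finset.mem_cons_of_mem hj)
    have hiA := hf i (Finset.mem_cons_self i s)
    rw [Finset.sup_cons, Finset.sup_cons, ← hsν]
    exact ⟨hA.2.1 _ hiA _ hsA, hν.2.1 _ hiA _ hsA⟩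

theorem IsBRHomOn.respectsMeetsCovers {A D : Set (Set γ)} {ν μ : Set γ → β}
    (hA : IsSetRing A) (hDA : D ⊆ A) (hD : ∀ E ∈ D, ∀ F ∈ D, E ⊓ F ≠ ⊥ → E ⊓ F ∈ D)
    (hν : IsBRHomOn A ν) (hνμ : ∀ E ∈ D, ν E = μ E) : RespectsMeetsCovers D μ where
  inf E hE F hF hEF := by
    refine ⟨hD E hE F hF hEF, ?_⟩
    rw [← hνμ _ hE, ← hνμ _ hF, ← hνμ _ (hD E hE F hF hEF)]
    exact hν.2.2.1 E (hDA hE) F (hDA hF)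
  inf_eq_bot E hE F hF hEF := by
    rw [← hνμ _ hE, ← hνμ _ hF, ← hν.2.2.1 E (hDA hE) F (hDA hF)]
    change ν (E ⊓ F) = ⊥
    rw [hEF]
    exact hν.1
  sup E hE n G hG hEG := by
    rw [← hνμ E hE, hEG, (hν.finset_sup hA _ fun i _ => hDA (hG i)).2]
    exact Finset.sup_congr rfl fun i _ => hνμ _ (hG i)

theorem RespectsMeetsCovers.exists_isBRHomOn {S : Set γ} {D : Set (Set γ)} {μ : Set γ → β}
    (h : RespectsMeetsCovers D μ) (hDS : ∀ E ∈ D, E ⊆ S) :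
    ∃ ν : Set γ → β, IsBRHomOn (setRingGenOn S D) ν ∧ ∀ E ∈ D, ν E = μ E := by
  classical
  have hdecomp : ∀ E ∈ setRingGenOn S D, ∃ b, CellDecomp D μ E b :=
    setRingGenOn_induction hDS (fun E hE => ⟨μ E, cellDecomp_of_mem hE⟩) ⟨⊥, cellDecomp_bot⟩
      (fun _ _ _ _ ⟨_, hE⟩ ⟨_, hF⟩ => ⟨_, hE.sup hF⟩)
      (fun _ _ _ _ ⟨_, hE⟩ ⟨_, hF⟩ => ⟨_, hE.inf h hF⟩)
      (fun _ _ _ _ ⟨_, hE⟩ ⟨_, hF⟩ => ⟨_, hE.sdiff h hF⟩)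
  let ν : Set γ → β := fun E => if hE : ∃ b, CellDecomp D μ E b then hE.choose else ⊥
  have hν : ∀ {E b}, CellDecomp D μ E b → ν E = b := fun {E _} hb => by
    have hE : ∃ b, CellDecomp D μ E b := ⟨_, hb⟩
    simp only [ν, dif_pos hE]
    exact hE.choose_spec.eq h hb
  refine ⟨ν, ⟨hν cellDecomp_bot, ?_, ?_, ?_⟩, fun E hE => hν (cellDecomp_of_mem hE)⟩ <;>
    intro E hE F hF <;>
    obtain ⟨x, hx⟩ := hdecomp E hE <;>
    obtain ⟨y, hy⟩ := hdecomp F hF <;>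
    rw [hν hx, hν hy]
  · exact hν (hx.sup hy)
  · exact hν (hx.inf h hy)
  · exact hν (hx.sdiff h hy)

theorem IsBRHomOn.eqOn_setRingGenOn {S : Set γ} {G : Set (Set γ)} (hGS : ∀ E ∈ G, E ⊆ S)
    {ν₁ ν₂ : Set γ → β} (h₁ : IsBRHomOn (setRingGenOn S G) ν₁)
    (h₂ : IsBRHomOn (setRingGenOn S G) ν₂) (hG : ∀ E ∈ G, ν₁ E = ν₂ E) :
    ∀ E ∈ setRingGenOn S G, ν₁ E = ν₂ E :=
  setRingGenOn_induction hGS hG (h₁.1.trans h₂.1.symm)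
    (fun E hE F hF hEF₁ hEF₂ => by rw [h₁.2.1 E hE F hF, h₂.2.1 E hE F hF, hEF₁, hEF₂])
    (fun E hE F hF hEF₁ hEF₂ => by rw [h₁.2.2.1 E hE F hF, h₂.2.2.1 E hE F hF, hEF₁, hEF₂])
    (fun E hE F hF hEF₁ hEF₂ => by rw [h₁.2.2.2 E hE F hF, h₂.2.2.2 E hE F hF, hEF₁, hEF₂])

theorem respectsMeetsCovers_iff {D : Set (Set γ)} {μ : Set γ → β} :
    RespectsMeetsCovers D μ ↔
      (∀ E ∈ D, ∀ F ∈ D, ((E ∩ F).Nonempty → E ∩ F ∈ D ∧ μ (E ∩ F) = μ E ⊓ μ F) ∧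
          (E ∩ F = ∅ → μ E ⊓ μ F = ⊥)) ∧
        ∀ E ∈ D, ∀ (n : ℕ) (G : Fin n → Set γ), (∀ i, G i ∈ D) → E = ⋃ i, G i →
          μ E = Finset.univ.sup fun i => μ (G i) := by
  refine ⟨fun h => ⟨fun E hE F hF => ⟨fun hEF => h.inf E hE F hF hEF.ne_empty,
      h.inf_eq_bot E hE F hF⟩, fun E hE n G hG hEG => h.sup E hE n G hG ?_⟩,
    fun ⟨hmeet, hcover⟩ => ⟨fun E hE F hF hEF => (hmeet E hE F hF).1 ?_,
      fun E hE F hF => (hmeet E hE F hF).2, fun E hE n G hG hEG => hcover E hE n G hG ?_⟩⟩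
  · exact hEG.trans (Finset.sup_univ_eq_iSup G).symm
  · exact Set.nonempty_iff_ne_empty.2 hEF
  · exact hEG.trans (Finset.sup_univ_eq_iSup G)

end BooleanRingHom

section Zigzag

variable (C : CategoryOfPaths Λ)

def zigzagInv (l : List (Λ × Λ)) : List (Λ × Λ) := (l.map Prod.swap).reverse

theorem zigzagRelIn_univ_nil {x y : Λ} : zigzagRelIn C Set.univ [] x y ↔ x = y := by
  simp [zigzagRelIn]

theorem zigzagRelIn_univ_append (l₁ l₂ : List (Λ × Λ)) (x y : Λ) :
    zigzagRelIn C Set.univ (l₁ ++ l₂) x y ↔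
      ∃ z, zigzagRelIn C Set.univ l₂ x z ∧ zigzagRelIn C Set.univ l₁ z y := by
  induction l₁ generalizing y with
  | nil => simp [zigzagRelIn_univ_nil]
  | cons p l ih =>
    simp only [List.cons_append, zigzagRelIn, ih]
    constructor
    · rintro ⟨z, ⟨w, hw, hwz⟩, h⟩
      exact ⟨w, hw, z, hwz, h⟩
    · rintro ⟨w, hw, z, hwz, h⟩
      exact ⟨z, ⟨w, hw, hwz⟩, h⟩

theorem zigzagRelIn_univ_zigzagInv (l : List (Λ × Λ)) (x y : Λ) :
    zigzagRelIn C Set.univ (zigzagInv l) y x ↔ zigzagRelIn C Set.univ l x y := by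
  induction l generalizing y with
  | nil => simpa [zigzagInv, zigzagRelIn_univ_nil] using eq_comm
  | cons p l ih =>
    rw [zigzagInv, List.map_cons, List.reverse_cons, zigzagRelIn_univ_append, ← zigzagInv]
    simp only [zigzagRelIn, Set.mem_univ, true_and, and_true]
    constructor
    · rintro ⟨z, ⟨_, rfl, ha, hb, hc⟩, hrest⟩
      exact ⟨z, (ih z).1 hrest, hb, ha, hc.symm⟩
    · rintro ⟨z, hz, ha, hb, hc⟩
      exact ⟨z, ⟨y, rfl, hb, ha, hc.symm⟩, (ih z).2 hz⟩

theorem zigzagRelIn_univ_left_unique (l : List (Λ × Λ)) {x x' z : Λ}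
    (h : zigzagRelIn C Set.univ l x z) (h' : zigzagRelIn C Set.univ l x' z) : x = x' := by
  induction l generalizing z with
  | nil => exact ((zigzagRelIn_univ_nil C).1 h).trans ((zigzagRelIn_univ_nil C).1 h').symm
  | cons p l ih =>
    obtain ⟨w, hw, h₁, -, -, h₂⟩ := h
    obtain ⟨w', hw', h₁', -, -, h₂'⟩ := h'
    obtain rfl : w = w' := C.left_cancel h₁ h₁' (h₂.trans h₂'.symm)
    exact ih hw hw'

theorem zigzagRelIn_univ_range (l : List (Λ × Λ)) (hl : l ≠ []) {x y : Λ}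
    (h : zigzagRelIn C Set.univ l x y) : C.r x = C.s (l.getLast hl).2 := by
  induction l generalizing y with
  | nil => exact absurd rfl hl
  | cons p l ih =>
    obtain ⟨z, hz, h₁, -⟩ := h
    cases l with
    | nil => rw [(zigzagRelIn_univ_nil C).1 hz]; exact h₁.symm
    | cons q t => exact ih (List.cons_ne_nil q t) hz

theorem zigzagDomIn_univ_inter (l₁ l₂ : List (Λ × Λ)) :
    zigzagDomIn C Set.univ l₁ ∩ zigzagDomIn C Set.univ l₂ =
      zigzagDomIn C Set.univ (l₁ ++ (zigzagInv l₂ ++ l₂)) := by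
  ext x
  simp only [zigzagDomIn, Set.mem_inter_iff, Set.mem_ofPred_eq, zigzagRelIn_univ_append]
  constructor
  · rintro ⟨⟨y₁, h₁⟩, ⟨y₂, h₂⟩⟩
    exact ⟨y₁, x, ⟨y₂, h₂, (zigzagRelIn_univ_zigzagInv C l₂ x y₂).2 h₂⟩, h₁⟩
  · rintro ⟨y, z, ⟨w, hw, hwz⟩, hy⟩
    obtain rfl := zigzagRelIn_univ_left_unique C l₂ hw
      ((zigzagRelIn_univ_zigzagInv C l₂ z w).1 hwz)
    exact ⟨⟨y, hy⟩, ⟨w, hw⟩⟩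

variable {C}

theorem IsZigzag.append {l₁ l₂ : List (Λ × Λ)} (h₁ : IsZigzag C l₁) (h₂ : IsZigzag C l₂)
    (hlink : ∀ p ∈ l₁.getLast?, ∀ q ∈ l₂.head?, C.s q.1 = C.s p.2) :
    IsZigzag C (l₁ ++ l₂) :=
  ⟨fun p hp => (List.mem_append.1 hp).elim (h₁.1 p) (h₂.1 p), h₁.2.append h₂.2 hlink⟩

theorem IsZigzag.zigzagInv_append_self {l : List (Λ × Λ)} (h : IsZigzag C l) :
    IsZigzag C (zigzagInv l ++ l) := by
  refine IsZigzag.append ⟨fun p hp => ?_, ?_⟩ h ?_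
  · obtain ⟨q, hq, rfl⟩ := List.mem_map.1 (List.mem_reverse.1 hp)
    exact (h.1 q hq).symm
  · change List.IsChain (fun p q => C.s q.1 = C.s p.2) (l.map Prod.swap).reverse
    rw [List.isChain_reverse, List.isChain_map]
    exact h.2.imp fun _ _ hpq => hpq.symm
  · intro p hp q hq
    rw [Option.mem_def] at hp hq
    rw [zigzagInv, List.getLast?_reverse, List.head?_map, hq] at hp
    rw [← Option.some_inj.1 hp]
    rfl

theorem relD0_univ_inter {Λ₀ : Set Λ} {v : Λ} {E F : Set Λ}
    (hE : E ∈ relD0 C Λ₀ Set.univ v) (hF : F ∈ relD0 C Λ₀ Set.univ v) (hEF : E ⊓ F ≠ ⊥) :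
    E ⊓ F ∈ relD0 C Λ₀ Set.univ v := by
  obtain ⟨-, l₁, h₁, hz₁, hm₁, hs₁, rfl⟩ := hE
  obtain ⟨-, l₂, h₂, hz₂, hm₂, hs₂, rfl⟩ := hF
  have hne : zigzagInv l₂ ++ l₂ ≠ [] := by simp [h₂]
  refine ⟨Set.nonempty_iff_ne_empty.2 hEF, l₁ ++ (zigzagInv l₂ ++ l₂), by simp [h₁],
    hz₁.append hz₂.zigzagInv_append_self fun p hp q hq => ?_, fun p hp => ?_, ?_,
    zigzagDomIn_univ_inter C l₁ l₂⟩
  · obtain rfl : p = l₁.getLast h₁ := by simpa [List.getLast?_eq_some_getLast h₁] using hp.symm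
    obtain rfl : q = (l₂.getLast h₂).swap := by
      simpa [zigzagInv, List.head?_append, List.getLast?_eq_some_getLast h₂] using hq.symm
    exact hs₂.trans hs₁.symm
  · simp only [zigzagInv, List.mem_append, List.mem_reverse, List.mem_map] at hp
    rcases hp with hp | ⟨q, hq, rfl⟩ | hp
    · exact hm₁ p hp
    · exact (hm₂ q hq).symm
    · exact hm₂ p hp
  · rw [List.getLast_append_of_ne_nil _ hne, List.getLast_append_of_ne_nil _ h₂]
    exact hs₂

theorem relD0_univ_subset {Λ₀ : Set Λ} {v : Λ} {E : Set Λ} (hE : E ∈ relD0 C Λ₀ Set.univ v) :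
    E ⊆ {α | α ∈ Set.univ ∧ C.r α = v} := by
  obtain ⟨-, l, hl, -, -, hs, rfl⟩ := hE
  rintro x ⟨y, hy⟩
  exact ⟨Set.mem_univ x, (zigzagRelIn_univ_range C l hl hy).trans hs⟩

end Zigzag

theorem statement7_general {Λ : Type u} (C : CategoryOfPaths Λ) (Λ₀ : Set Λ)
    (v : Λ)
    {R : Type*} [GeneralizedBooleanAlgebra R] (μ : Set Λ → R) :
    ((∃ ν : Set Λ → R, IsBRHomOn (relAring C Λ₀ Set.univ v) ν ∧
        ∀ E ∈ relD0 C Λ₀ Set.univ v, ν E = μ E) ↔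
      ((∀ E ∈ relD0 C Λ₀ Set.univ v, ∀ F ∈ relD0 C Λ₀ Set.univ v,
          ((E ∩ F).Nonempty →
            E ∩ F ∈ relD0 C Λ₀ Set.univ v ∧ μ (E ∩ F) = μ E ⊓ μ F) ∧
          (E ∩ F = ∅ → μ E ⊓ μ F = ⊥)) ∧
        (∀ E ∈ relD0 C Λ₀ Set.univ v, ∀ (n : ℕ) (G : Fin n → Set Λ),
          (∀ i, G i ∈ relD0 C Λ₀ Set.univ v) → E = ⋃ i, G i →
          μ E = Finset.univ.sup fun i => μ (G i)))) ∧
    (∀ ν₁ ν₂ : Set Λ → R, IsBRHomOn (relAring C Λ₀ Set.univ v) ν₁ →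
      IsBRHomOn (relAring C Λ₀ Set.univ v) ν₂ →
      (∀ E ∈ relD0 C Λ₀ Set.univ v, ν₁ E = μ E) →
      (∀ E ∈ relD0 C Λ₀ Set.univ v, ν₂ E = μ E) →
      ∀ E ∈ relAring C Λ₀ Set.univ v, ν₁ E = ν₂ E) := by
  have hDS : ∀ E ∈ relD0 C Λ₀ Set.univ v, E ⊆ {α | α ∈ Set.univ ∧ C.r α = v} :=
    fun E hE => relD0_univ_subset hE
  rw [← respectsMeetsCovers_iff]
  refine ⟨⟨fun ⟨ν, hν, hνμ⟩ => ?_, fun h => h.exists_isBRHomOn hDS⟩,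
    fun ν₁ ν₂ h₁ h₂ hμ₁ hμ₂ =>
      h₁.eqOn_setRingGenOn hDS h₂ fun E hE => (hμ₁ E hE).trans (hμ₂ E hE).symm⟩
  exact hν.respectsMeetsCovers (isSetRingOn_setRingGenOn hDS).1 subset_setRingGenOn
    (fun E hE F hF => relD0_univ_inter hE hF) hνμ

/-- Theorem 5.1. A map `μ : 𝒟(Λ₀,Λ)⁰_v → R` extends to a
Boolean ring homomorphism `𝒜(Λ₀,Λ)_v → R` iff it respects intersections and
finite covers of generators, and the extension is unique. -/
theorem statement7 {Λ : Type u} (C : CategoryOfPaths Λ) (Λ₀ : Set Λ)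
    (hsub : IsSubcategory C Λ₀) (v : Λ) (hv0 : v ∈ Λ₀) (hv : C.r v = v)
    {R : Type*} [GeneralizedBooleanAlgebra R] (μ : Set Λ → R) :
    ((∃ ν : Set Λ → R, IsBRHomOn (relAring C Λ₀ Set.univ v) ν ∧
        ∀ E ∈ relD0 C Λ₀ Set.univ v, ν E = μ E) ↔
      ((∀ E ∈ relD0 C Λ₀ Set.univ v, ∀ F ∈ relD0 C Λ₀ Set.univ v,
          ((E ∩ F).Nonempty →
            E ∩ F ∈ relD0 C Λ₀ Set.univ v ∧ μ (E ∩ F) = μ E ⊓ μ F) ∧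
          (E ∩ F = ∅ → μ E ⊓ μ F = ⊥)) ∧
        (∀ E ∈ relD0 C Λ₀ Set.univ v, ∀ (n : ℕ) (G : Fin n → Set Λ),
          (∀ i, G i ∈ relD0 C Λ₀ Set.univ v) → E = ⋃ i, G i →
          μ E = Finset.univ.sup fun i => μ (G i)))) ∧
    (∀ ν₁ ν₂ : Set Λ → R, IsBRHomOn (relAring C Λ₀ Set.univ v) ν₁ →
      IsBRHomOn (relAring C Λ₀ Set.univ v) ν₂ →
      (∀ E ∈ relD0 C Λ₀ Set.univ v, ν₁ E = μ E) →
      (∀ E ∈ relD0 C Λ₀ Set.univ v, ν₂ E = μ E) →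
      ∀ E ∈ relAring C Λ₀ Set.univ v, ν₁ E = ν₂ E) :=
  statement7_general C Λ₀ v μ
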